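/- arXiv:1303.2607 — 4 statements merged into one kernel-verified Lean document; each statement's English description precedes it below -/
import Mathlib

section
/- A {0,1,-1}-matrix in which every column has at most two nonzero entries, and whose rows can be partitioned into two sets such that for every column the two nonzero entries (if of the same sign) lie in different sets and (if of opposite signs) lie in the same set, is totally unimodular. -/
/-!
Weight row `i` by `ε i = ±1` according to its part of the partition. The partition condition says
exactly that in every column the (at most two) weighted nonzero entries cancel, and this survives
passing to square submatrices. Expanding a square submatrix along a column with at most one
nonzero entry reduces to a smaller minor; if there is no such column, every column has exactly two
nonzero entries, so the weighted sum of the rows vanishes and the determinant is `0`.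
-/

open Finset

namespace Matrix

variable {m n R : Type*} [CommRing R]

lemma mem_range_signType_cast_iff {x : R} :
    x ∈ Set.range (SignType.cast : SignType → R) ↔ x = 0 ∨ x = 1 ∨ x = -1 := by
  constructor
  · rintro ⟨s, rfl⟩
    cases s <;> simp
  · rintro (rfl | rfl | rfl)
    exacts [⟨0, rfl⟩, ⟨1, rfl⟩, ⟨-1, rfl⟩]

lemma eq_neg_of_mem_range_signType_cast {a b : R}
    (ha : a ∈ Set.range (SignType.cast : SignType → R)) (hb : b ∈ Set.range SignType.cast)
    (ha₀ : a ≠ 0) (hb₀ : b ≠ 0) (hab : a ≠ b) : b = -a := by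
  rcases mem_range_signType_cast_iff.mp ha with rfl | rfl | rfl <;>
    rcases mem_range_signType_cast_iff.mp hb with rfl | rfl | rfl <;> simp_all

lemma det_succ_column_of_forall_ne_eq_zero {k : ℕ} (B : Matrix (Fin (k + 1)) (Fin (k + 1)) R)
    {i₀ j : Fin (k + 1)} (h : ∀ i ≠ i₀, B i j = 0) :
    B.det = (-1) ^ (i₀ + j : ℕ) * B i₀ j * (B.submatrix i₀.succAbove j.succAbove).det := by
  rw [det_succ_column B j, Fintype.sum_eq_single i₀ fun i hi => by simp [h i hi]]

def ColumnsCancel (ε : m → R) (A : Matrix m n R) : Prop :=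
  ∀ j i₁ i₂, i₁ ≠ i₂ → A i₁ j ≠ 0 → A i₂ j ≠ 0 → ε i₁ * A i₁ j + ε i₂ * A i₂ j = 0

lemma columnsCancel_of_partition {A : Matrix m n R}
    (hA : ∀ i j, A i j ∈ Set.range (SignType.cast : SignType → R)) (I : m → Bool)
    (hpart : ∀ (j : n) (i₁ i₂ : m), i₁ ≠ i₂ → A i₁ j ≠ 0 → A i₂ j ≠ 0 →
      (A i₁ j = A i₂ j → I i₁ ≠ I i₂) ∧ (A i₁ j ≠ A i₂ j → I i₁ = I i₂)) :
    ColumnsCancel (fun i => if I i then 1 else -1) A := by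
  intro j i₁ i₂ hne h₁ h₂
  obtain ⟨hsame, hdiff⟩ := hpart j i₁ i₂ hne h₁ h₂
  dsimp only
  by_cases hab : A i₁ j = A i₂ j
  · have hI := hsame hab
    rw [← hab, ← add_mul]
    revert hI
    cases I i₁ <;> cases I i₂ <;> simp
  · rw [hdiff hab, eq_neg_of_mem_range_signType_cast (hA i₁ j) (hA i₂ j) h₁ h₂ hab]
    ring

lemma ColumnsCancel.submatrix {m' n' : Type*} {ε : m → R} {A : Matrix m n R}
    (h : ColumnsCancel ε A) {f : m' → m} (hf : f.Injective) (g : n' → n) :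
    ColumnsCancel (ε ∘ f) (A.submatrix f g) :=
  fun j _ _ hne => h (g j) _ _ (hf.ne hne)

variable [Fintype m] [DecidableEq R]

lemma card_filter_submatrix_ne_zero_le {m' n' : Type*} [Fintype m'] (A : Matrix m n R)
    {f : m' → m} (hf : f.Injective) (g : n' → n) (j : n') :
    #{i | A.submatrix f g i j ≠ 0} ≤ #{i | A i (g j) ≠ 0} :=
  card_le_card_of_injOn f (fun _ hi => mem_filter.mpr ⟨mem_univ _, (mem_filter.mp hi).2⟩) hf.injOn

lemma ColumnsCancel.vecMul_apply_eq_zero [DecidableEq m] {ε : m → R} {A : Matrix m n R}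
    (h : ColumnsCancel ε A) {j : n} (hj : #{i | A i j ≠ 0} = 2) : (ε ᵥ* A) j = 0 := by
  obtain ⟨x, y, hxy, hs⟩ := card_eq_two.mp hj
  have hsupp : ∀ i, A i j ≠ 0 ↔ i = x ∨ i = y := fun i => by
    simpa using congrArg (i ∈ ·) hs
  have hsum : ∑ i with A i j ≠ 0, ε i * A i j = ∑ i, ε i * A i j :=
    sum_filter_of_ne fun i _ hi => right_ne_zero_of_mul hi
  rw [vecMul, dotProduct, ← hsum, hs, sum_pair hxy]
  exact h j x y hxy ((hsupp x).mpr (.inl rfl)) ((hsupp y).mpr (.inr rfl))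

variable [IsDomain R]

theorem ColumnsCancel.det_mem_range_signType_cast {k : ℕ} {ε : Fin k → R}
    {B : Matrix (Fin k) (Fin k) R} (h : ColumnsCancel ε B) (hε : ∀ i, ε i ≠ 0)
    (hB : ∀ i j, B i j ∈ Set.range (SignType.cast : SignType → R))
    (hcol : ∀ j, #{i | B i j ≠ 0} ≤ 2) :
    B.det ∈ Set.range (SignType.cast : SignType → R) := by
  induction k with
  | zero => exact ⟨1, by simp⟩
  | succ k ih =>
    by_cases hsparse : ∃ j, #{i | B i j ≠ 0} ≤ 1
    · obtain ⟨j, hj⟩ := hsparse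
      obtain ⟨i₀, hi₀⟩ := card_le_one_iff_subset_singleton.mp hj
      have hzero : ∀ i ≠ i₀, B i j = 0 := fun i hi => by
        by_contra hne
        exact hi (mem_singleton.mp (hi₀ (by simpa using hne)))
      have hminor := ih (h.submatrix (Fin.succAbove_right_injective (p := i₀)) j.succAbove)
        (fun _ => hε _) (fun _ _ => hB _ _)
        (fun j' => (card_filter_submatrix_ne_zero_le B Fin.succAbove_right_injective _ j').trans
          (hcol _))
      rw [det_succ_column_of_forall_ne_eq_zero B hzero]
      change _ ∈ MonoidHom.mrange SignType.castHom.toMonoidHom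
      refine mul_mem (mul_mem (pow_mem ?_ _) (hB i₀ j)) hminor
      exact ⟨-1, by simp⟩
    · push Not at hsparse
      refine ⟨0, (exists_vecMul_eq_zero_iff.mp ⟨ε, fun hε0 => hε 0 (congrFun hε0 0), ?_⟩).symm⟩
      funext j
      exact h.vecMul_apply_eq_zero (le_antisymm (hcol j) (hsparse j))

theorem ColumnsCancel.isTotallyUnimodular {ε : m → R} {A : Matrix m n R}
    (h : ColumnsCancel ε A) (hε : ∀ i, ε i ≠ 0)
    (hA : ∀ i j, A i j ∈ Set.range (SignType.cast : SignType → R))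
    (hcol : ∀ j, #{i | A i j ≠ 0} ≤ 2) :
    A.IsTotallyUnimodular := fun _ _ g hf _ =>
  (h.submatrix hf g).det_mem_range_signType_cast (fun _ => hε _) (fun _ _ => hA _ _)
    fun j => (card_filter_submatrix_ne_zero_le A hf g j).trans (hcol _)

end Matrix

theorem hellerTompkins_totallyUnimodular_general {m n : Type*} [Fintype m]
    (A : Matrix m n ℤ)
    (hentries : ∀ i j, A i j = 0 ∨ A i j = 1 ∨ A i j = -1)
    (hcol : ∀ j : n, (Finset.univ.filter fun i : m => A i j ≠ 0).card ≤ 2)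
    (I : m → Bool)
    (hpart : ∀ (j : n) (i₁ i₂ : m), i₁ ≠ i₂ → A i₁ j ≠ 0 → A i₂ j ≠ 0 →
      (A i₁ j = A i₂ j → I i₁ ≠ I i₂) ∧ (A i₁ j ≠ A i₂ j → I i₁ = I i₂)) :
    A.IsTotallyUnimodular := by
  have hA : ∀ i j, A i j ∈ Set.range (SignType.cast : SignType → ℤ) :=
    fun i j => Matrix.mem_range_signType_cast_iff.mpr (hentries i j)
  refine (Matrix.columnsCancel_of_partition hA I hpart).isTotallyUnimodular (fun i => ?_) hA hcol
  cases I i <;> decide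

/-- Heller–Tompkins: a `{0, 1, -1}`-matrix in which every column has at most two
nonzero entries, whose rows can be two-partitioned (via `I : m → Bool`) so that
any two nonzero entries of a column with the same sign lie in different parts,
and any two with opposite signs lie in the same part, is totally unimodular. -/
theorem hellerTompkins_totallyUnimodular {m n : Type*} [Fintype m] [DecidableEq m]
    (A : Matrix m n ℤ)
    (hentries : ∀ i j, A i j = 0 ∨ A i j = 1 ∨ A i j = -1)
    (hcol : ∀ j : n, (Finset.univ.filter fun i : m => A i j ≠ 0).card ≤ 2)
    (I : m → Bool)
    (hpart : ∀ (j : n) (i₁ i₂ : m), i₁ ≠ i₂ → A i₁ j ≠ 0 → A i₂ j ≠ 0 →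
      (A i₁ j = A i₂ j → I i₁ ≠ I i₂) ∧ (A i₁ j ≠ A i₂ j → I i₁ = I i₂)) :
    A.IsTotallyUnimodular :=
  hellerTompkins_totallyUnimodular_general A hentries hcol I hpart
end

section
/- If A is a totally unimodular matrix and b is an integer vector, then every vertex (basic feasible solution) of the polyhedron {x : A x = b, x ≥ 0} has all integer coordinates. -/
/-!
At a vertex `x`, the columns of `A` indexed by the support of `x` are linearly independent:
a kernel vector `d` supported there would make both `x + ε d` and `x - ε d` feasible for small
`ε > 0`, exhibiting `x` as their midpoint. Selecting as many linearly independent rows gives a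
square nonsingular submatrix `B` with `B x_S = b_I`. Total unimodularity forces `det B = ±1`,
so `B` is invertible over `ℤ` and `x_S = B⁻¹ b_I` is integral.
-/

open Filter Topology Function Matrix

namespace Matrix

variable {m n ι R : Type*}

lemma IsTotallyUnimodular.exists_map_intCast_eq [CommRing R] {A : Matrix m n R}
    (hA : A.IsTotallyUnimodular) : ∃ Az : Matrix m n ℤ, Az.map (↑) = A := by
  choose σ hσ using hA.apply
  exact ⟨.of fun i j => σ i j, by ext i j; simp [hσ]⟩

lemma IsTotallyUnimodular.of_map {S : Type*} [CommRing R] [CommRing S] {f : R →+* S}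
    (hf : Injective f) {A : Matrix m n R} (hA : (A.map f).IsTotallyUnimodular) :
    A.IsTotallyUnimodular := by
  intro k g h hg hh
  obtain ⟨σ, hσ⟩ := hA k g h hg hh
  refine ⟨σ, hf ?_⟩
  rw [SignType.map_cast, hσ, RingHom.map_det]
  rfl

lemma IsTotallyUnimodular.isUnit_det [CommRing R] [Fintype ι] [DecidableEq ι]
    {B : Matrix ι ι R} (hB : B.IsTotallyUnimodular) (h : B.det ≠ 0) : IsUnit B.det := by
  obtain ⟨σ, hσ⟩ := (isTotallyUnimodular_iff_fintype B).1 hB ι id id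
  rw [submatrix_id_id] at hσ
  rcases σ with _ | _ | _
  · exact absurd hσ.symm h
  · simp [← hσ]
  · simp [← hσ]

lemma eq_comp_inv_mulVec_of_map_mulVec_eq {S : Type*} [CommRing R] [CommRing S]
    [Fintype ι] [DecidableEq ι] (f : R →+* S) {B : Matrix ι ι R} (hB : IsUnit B.det)
    {y : ι → S} {c : ι → R} (h : B.map f *ᵥ y = f ∘ c) : y = f ∘ (B⁻¹ *ᵥ c) := by
  have hinv : B⁻¹.map f * B.map f = 1 := by
    rw [← f.mapMatrix_apply, ← f.mapMatrix_apply, ← map_mul, nonsing_inv_mul B hB, map_one]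
  calc y = (B⁻¹.map f * B.map f) *ᵥ y := by rw [hinv, one_mulVec]
    _ = B⁻¹.map f *ᵥ (f ∘ c) := by rw [← mulVec_mulVec, h]
    _ = f ∘ (B⁻¹ *ᵥ c) := funext fun i => (f.map_mulVec _ _ i).symm

lemma exists_isUnit_submatrix_of_linearIndependent_col {K : Type*} [Field K] [Fintype m]
    [Fintype n] [DecidableEq n] {M : Matrix m n K} (hM : LinearIndependent K M.col) :
    ∃ f : n → m, IsUnit (M.submatrix f id) := by
  have hspan : Submodule.span K (Set.range M.row) = ⊤ := by
    apply Submodule.eq_top_of_finrank_eq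
    rw [← row_transpose] at hM
    rw [← rank_eq_finrank_span_row, ← rank_transpose, hM.rank_matrix,
      Module.finrank_fintype_fun_eq_card]
  obtain ⟨κ, a, -, hspan', hli⟩ := exists_linearIndependent' K M.row
  let e : n ≃ κ := (Pi.basisFun K n).indexEquiv (.mk hli (by rw [hspan', hspan]))
  exact ⟨a ∘ e, linearIndependent_rows_iff_isUnit.1 (hli.comp e e.injective)⟩

lemma submatrix_subtype_mulVec_of_support_subset [Fintype n] [NonUnitalNonAssocSemiring R]
    (A : Matrix m n R) (f : ι → m) {s : Set n} [Fintype s] {x : n → R} (hx : support x ⊆ s) :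
    A.submatrix f ((↑) : s → n) *ᵥ (fun j => x j) = (A *ᵥ x) ∘ f := by
  ext i
  change ∑ j : s, A (f i) j * x j = ∑ j, A (f i) j * x j
  rw [← Finset.sum_subtype s.toFinset (fun _ => Set.mem_toFinset) fun j => A (f i) j * x j]
  refine Finset.sum_subset (Finset.subset_univ _) fun j _ hj => ?_
  rw [notMem_support.1 fun h => hj (Set.mem_toFinset.2 (hx h)), mul_zero]

end Matrix

lemma exists_pos_abs_mul_le {ι : Type*} [Finite ι] {x d : ι → ℝ} (hx : ∀ j, 0 ≤ x j)
    (hd : support d ⊆ support x) : ∃ ε > 0, ∀ j, |ε * d j| ≤ x j := by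
  have : ∀ᶠ ε in 𝓝 (0 : ℝ), ∀ j, |ε * d j| ≤ x j := by
    refine eventually_all.2 fun j => ?_
    rcases (hx j).eq_or_lt with hxj | hxj
    · have : d j = 0 := not_not.1 fun h => hd h hxj.symm
      exact .of_forall fun ε => by rw [this, mul_zero, abs_zero]; exact hx j
    · have : Tendsto (fun ε : ℝ => |ε * d j|) (𝓝 0) (𝓝 0) :=
        Continuous.tendsto' (by fun_prop) 0 0 (by simp)
      exact this.eventually (ge_mem_nhds hxj)
  exact this.exists_gt

lemma eq_zero_of_add_mem_of_sub_mem {E : Type*} [AddCommGroup E] [Module ℝ E] {P : Set E}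
    {x d : E} (hvertex : ¬ ∃ y ∈ P, ∃ z ∈ P, y ≠ z ∧ ∃ t : ℝ, 0 < t ∧ t < 1 ∧
      x = t • y + (1 - t) • z) (hadd : x + d ∈ P) (hsub : x - d ∈ P) : d = 0 := by
  by_contra hd
  refine hvertex ⟨x + d, hadd, x - d, hsub, fun h => hd ?_, 1 / 2, by norm_num, by norm_num, ?_⟩
  · have : (2 : ℝ) • d = 0 := by rw [two_smul]; linear_combination (norm := module) h
    exact (smul_eq_zero.1 this).resolve_left two_ne_zero
  · module

section StandardPolyhedron

variable {m n : Type*} [Fintype n]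

def standardPolyhedron (A : Matrix m n ℝ) (b : m → ℝ) : Set (n → ℝ) :=
  {x | A *ᵥ x = b ∧ ∀ j, 0 ≤ x j}

variable {A : Matrix m n ℝ} {b : m → ℝ} {x : n → ℝ}

lemma add_mem_standardPolyhedron (hx : x ∈ standardPolyhedron A b) {d : n → ℝ}
    (hd : A *ᵥ d = 0) (hdx : ∀ j, |d j| ≤ x j) : x + d ∈ standardPolyhedron A b :=
  ⟨by rw [mulVec_add, hx.1, hd, add_zero], fun j => by
    linarith [neg_abs_le (d j), hdx j, show (x + d) j = x j + d j from rfl]⟩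

lemma linearIndepOn_col_support_of_vertex (hx : x ∈ standardPolyhedron A b)
    (hvertex : ¬ ∃ y ∈ standardPolyhedron A b, ∃ z ∈ standardPolyhedron A b, y ≠ z ∧
      ∃ t : ℝ, 0 < t ∧ t < 1 ∧ x = t • y + (1 - t) • z) :
    LinearIndepOn ℝ A.col (support x) := by
  rw [linearIndepOn_iff]
  intro l hl hAl
  have hAl : A *ᵥ l = 0 := by
    ext i
    simpa [Finsupp.linearCombination_apply, Finsupp.sum_fintype, mulVec, dotProduct, mul_comm]
      using congr_fun hAl i
  have hl : support l ⊆ support x := by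
    rw [Finsupp.fun_support_eq]
    exact (Finsupp.mem_supported ℝ l).1 hl
  obtain ⟨ε, hε, hεl⟩ := exists_pos_abs_mul_le hx.2 hl
  have hadd := add_mem_standardPolyhedron hx (d := ε • ⇑l)
    (by rw [mulVec_smul, hAl, smul_zero]) hεl
  have hsub := add_mem_standardPolyhedron hx (d := -(ε • ⇑l))
    (by rw [mulVec_neg, mulVec_smul, hAl, smul_zero, neg_zero]) fun j => by simpa using hεl j
  rw [← sub_eq_add_neg] at hsub
  ext j
  simpa [hε.ne'] using congr_fun (eq_zero_of_add_mem_of_sub_mem hvertex hadd hsub) j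

end StandardPolyhedron

/-- If `A` is totally unimodular and `b` is an integer vector, then every vertex
(a point of the polyhedron `{x : A x = b, x ≥ 0}` that is not a proper convex
combination of two distinct points of the polyhedron) has integer coordinates. -/
theorem vertex_of_totallyUnimodular_is_integral {m n : ℕ}
    (A : Matrix (Fin m) (Fin n) ℝ) (hA : A.IsTotallyUnimodular)
    (b : Fin m → ℝ) (hb : ∀ i, ∃ z : ℤ, b i = (z : ℝ))
    (P : Set (Fin n → ℝ))
    (hP : P = {x : Fin n → ℝ | A.mulVec x = b ∧ ∀ j, 0 ≤ x j})
    (x : Fin n → ℝ) (hx : x ∈ P)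
    (hvertex : ¬ ∃ y ∈ P, ∃ z ∈ P, y ≠ z ∧ ∃ t : ℝ, 0 < t ∧ t < 1 ∧
      x = t • y + (1 - t) • z) :
    ∀ j, ∃ k : ℤ, x j = (k : ℝ) := by
  classical
  subst hP
  obtain ⟨Az, rfl⟩ := hA.exists_map_intCast_eq
  choose bz hbz using hb
  obtain rfl : b = Int.cast ∘ bz := funext hbz
  have hli : LinearIndepOn ℝ (Az.map Int.cast).col (support x) :=
    linearIndepOn_col_support_of_vertex hx hvertex
  obtain ⟨f, hf⟩ := exists_isUnit_submatrix_of_linearIndependent_col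
    (M := (Az.map Int.cast).submatrix id ((↑) : support x → Fin n)) hli
  set Bz := Az.submatrix f ((↑) : support x → Fin n)
  have hB : IsUnit ((Int.castRingHom ℝ).mapMatrix Bz).det := (isUnit_iff_isUnit_det _).1 hf
  have hBz : IsUnit Bz.det := by
    refine ((hA.of_map (f := Int.castRingHom ℝ) Int.cast_injective).submatrix _ _).isUnit_det
      fun h => ?_
    rw [← RingHom.map_det, h, map_zero] at hB
    exact not_isUnit_zero hB
  have hsol := eq_comp_inv_mulVec_of_map_mulVec_eq (Int.castRingHom ℝ) hBz (c := bz ∘ f)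
    ((submatrix_subtype_mulVec_of_support_subset _ f subset_rfl).trans (congrArg (· ∘ f) hx.1))
  intro j
  by_cases hj : x j = 0
  · exact ⟨0, by simp [hj]⟩
  · exact ⟨_, congr_fun hsol ⟨j, hj⟩⟩
end

section
/- The LP relaxation of the generalized assignment problem attains its optimum at an integral point; hence GAP has an integral optimal solution whenever it is feasible. -/
/-!
Only the total mass `∑ h, x p q h` that a fractional solution puts on a pair `(p, q)` matters
for feasibility, and these masses form a doubly stochastic matrix. Replacing every cost
`D p q h` by the cheapest one over the models `h` can only lower the objective, and the
resulting linear objective on doubly stochastic matrices is minimised at a permutation matrix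
by Birkhoff's theorem. Sending each `p` to `σ p` through a cheapest model for an optimal
permutation `σ` is therefore an integral optimum.
-/

open Finset

section FiniteArgmin

variable {L : Type*} [Finite L] [Nonempty L]

noncomputable def finiteArgmin (c : L → ℝ) : L :=
  (Finite.exists_min c).choose

theorem finiteArgmin_le (c : L → ℝ) (h : L) : c (finiteArgmin c) ≤ c h :=
  (Finite.exists_min c).choose_spec h

end FiniteArgmin

theorem exists_perm_sum_le_of_mem_doublyStochastic {ι : Type*} [Fintype ι] [DecidableEq ι]
    (c : Matrix ι ι ℝ) {M : Matrix ι ι ℝ} (hM : M ∈ doublyStochastic ℝ ι) :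
    ∃ σ : Equiv.Perm ι, ∑ p, c p (σ p) ≤ ∑ p, ∑ q, c p q * M p q := by
  let f : Matrix ι ι ℝ →ₗ[ℝ] ℝ := ∑ p, ∑ q, c p q • Matrix.entryLinearMap ℝ ℝ p q
  have hf : ∀ N, f N = ∑ p, ∑ q, c p q * N p q := fun N => by
    simp [f, LinearMap.sum_apply]
  rw [← SetLike.mem_coe, doublyStochastic_eq_convexHull_permMatrix] at hM
  obtain ⟨_, ⟨σ, rfl⟩, hσ⟩ :=
    (f.concaveOn (convex_convexHull ℝ _)).exists_le_of_mem_convexHull (subset_convexHull ℝ _) hM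
  refine ⟨σ, ?_⟩
  simpa [hf, Equiv.Perm.permMatrix, PEquiv.toMatrix_apply, Equiv.toPEquiv] using hσ

section GeneralizedAssignment

variable {ι L : Type*} [Fintype ι] [Fintype L]

def IsFractionalAssignment (x : ι → ι → L → ℝ) : Prop :=
  (∀ p q h, 0 ≤ x p q h ∧ x p q h ≤ 1) ∧
  (∀ q, ∑ h, ∑ p, x p q h = 1) ∧
  (∀ p, ∑ h, ∑ q, x p q h = 1)

def assignmentCost (D x : ι → ι → L → ℝ) : ℝ :=
  ∑ h, ∑ p, ∑ q, D p q h * x p q h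

def marginal (x : ι → ι → L → ℝ) : Matrix ι ι ℝ :=
  fun p q => ∑ h, x p q h

theorem marginal_mem_doublyStochastic [DecidableEq ι] {x : ι → ι → L → ℝ}
    (hx : IsFractionalAssignment x) : marginal x ∈ doublyStochastic ℝ ι := by
  obtain ⟨hx01, hcol, hrow⟩ := hx
  refine mem_doublyStochastic_iff_sum.2
    ⟨fun p q => sum_nonneg fun h _ => (hx01 p q h).1, fun p => ?_, fun q => ?_⟩
  · rw [← hrow p]; exact sum_comm
  · rw [← hcol q]; exact sum_comm

theorem sum_finiteArgmin_mul_marginal_le_assignmentCost [Nonempty L] (D : ι → ι → L → ℝ)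
    {x : ι → ι → L → ℝ} (hx : ∀ p q h, 0 ≤ x p q h) :
    ∑ p, ∑ q, D p q (finiteArgmin (D p q)) * marginal x p q ≤ assignmentCost D x := by
  calc ∑ p, ∑ q, D p q (finiteArgmin (D p q)) * marginal x p q
      = ∑ p, ∑ q, ∑ h, D p q (finiteArgmin (D p q)) * x p q h := by
        simp only [marginal, mul_sum]
    _ ≤ ∑ p, ∑ q, ∑ h, D p q h * x p q h := by
        gcongr with p _ q _ h _
        exacts [hx p q h, finiteArgmin_le (D p q) h]
    _ = assignmentCost D x := by
        unfold assignmentCost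
        simp only [sum_comm (γ := L)]

end GeneralizedAssignment

section PermAssignment

variable {ι L : Type*} [DecidableEq ι] [DecidableEq L] (σ : Equiv.Perm ι) (g : ι → ι → L)

def permAssignment : ι → ι → L → ℝ :=
  fun p q h => if σ p = q ∧ g p q = h then 1 else 0

theorem permAssignment_eq_zero_or_one (p q : ι) (h : L) :
    permAssignment σ g p q h = 0 ∨ permAssignment σ g p q h = 1 := by
  unfold permAssignment; split_ifs <;> simp

variable [Fintype L]

theorem sum_permAssignment (p q : ι) :
    ∑ h, permAssignment σ g p q h = if σ p = q then 1 else 0 := by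
  unfold permAssignment
  split_ifs with hq <;> simp [hq]

variable [Fintype ι]

theorem isFractionalAssignment_permAssignment :
    IsFractionalAssignment (permAssignment σ g) := by
  refine ⟨fun p q h => ?_, fun q => ?_, fun p => ?_⟩
  · rcases permAssignment_eq_zero_or_one σ g p q h with h0 | h1 <;> simp [*]
  · rw [sum_comm]
    simp only [sum_permAssignment, ← Equiv.eq_symm_apply, sum_ite_eq', mem_univ, if_true]
  · rw [sum_comm]
    simp only [sum_permAssignment, sum_ite_eq, mem_univ, if_true]

theorem assignmentCost_permAssignment (D : ι → ι → L → ℝ) :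
    assignmentCost D (permAssignment σ g) = ∑ p, D p (σ p) (g p (σ p)) := by
  unfold assignmentCost permAssignment
  rw [sum_comm]
  refine sum_congr rfl fun p _ => ?_
  rw [sum_comm]
  simp [mul_ite, ite_and, sum_ite_eq, eq_comm (a := σ p)]

end PermAssignment

theorem gap_lp_relaxation_integral_optimum_general {n m : ℕ} (hm : 1 ≤ m)
    (D : Fin n → Fin n → Fin m → ℝ)
    (Feas : (Fin n → Fin n → Fin m → ℝ) → Prop)
    (hFeas : Feas = fun x =>
      (∀ p q h, 0 ≤ x p q h ∧ x p q h ≤ 1) ∧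
      (∀ q : Fin n, ∑ h : Fin m, ∑ p : Fin n, x p q h = 1) ∧
      (∀ p : Fin n, ∑ h : Fin m, ∑ q : Fin n, x p q h = 1)) :
    ∃ x, Feas x ∧ (∀ p q h, x p q h = 0 ∨ x p q h = 1) ∧
      ∀ y, Feas y →
        (∑ h : Fin m, ∑ p : Fin n, ∑ q : Fin n, D p q h * x p q h) ≤
        (∑ h : Fin m, ∑ p : Fin n, ∑ q : Fin n, D p q h * y p q h) := by
  have : Nonempty (Fin m) := ⟨⟨0, hm⟩⟩
  subst hFeas
  let c : Matrix (Fin n) (Fin n) ℝ := fun p q => D p q (finiteArgmin (D p q))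
  obtain ⟨σ, -, hσ⟩ := exists_min_image univ (fun τ : Equiv.Perm (Fin n) => ∑ p, c p (τ p))
    univ_nonempty
  let g : Fin n → Fin n → Fin m := fun p q => finiteArgmin (D p q)
  refine ⟨permAssignment σ g, isFractionalAssignment_permAssignment σ g,
    permAssignment_eq_zero_or_one σ g, fun y hy => ?_⟩
  obtain ⟨τ, hτ⟩ := exists_perm_sum_le_of_mem_doublyStochastic c (marginal_mem_doublyStochastic hy)
  calc assignmentCost D (permAssignment σ g) = ∑ p, c p (σ p) :=
        assignmentCost_permAssignment σ g D
    _ ≤ ∑ p, c p (τ p) := hσ τ (mem_univ τ)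
    _ ≤ ∑ p, ∑ q, c p q * marginal y p q := hτ
    _ ≤ assignmentCost D y :=
        sum_finiteArgmin_mul_marginal_le_assignmentCost D fun p q h => (hy.1 p q h).1

/-- The LP relaxation of GAP attains its optimum at an integral point: over the
polytope of `x ∈ [0,1]^{F_l×F_r×L}` satisfying the one-to-one matching equality
constraints, the linear objective is minimized at some `x` with all coordinates
in `{0,1}` — hence a feasible GAP has an integral optimal solution. -/
theorem gap_lp_relaxation_integral_optimum {n m : ℕ} (hm : 1 ≤ m)
    (D : Fin n → Fin n → Fin m → ℝ)
    (Feas : (Fin n → Fin n → Fin m → ℝ) → Prop)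
    (hFeas : Feas = fun x =>
      (∀ p q h, 0 ≤ x p q h ∧ x p q h ≤ 1) ∧
      (∀ q : Fin n, ∑ h : Fin m, ∑ p : Fin n, x p q h = 1) ∧
      (∀ p : Fin n, ∑ h : Fin m, ∑ q : Fin n, x p q h = 1))
    (hfeasible : ∃ x, Feas x) :
    ∃ x, Feas x ∧ (∀ p q h, x p q h = 0 ∨ x p q h = 1) ∧
      ∀ y, Feas y →
        (∑ h : Fin m, ∑ p : Fin n, ∑ q : Fin n, D p q h * x p q h) ≤
        (∑ h : Fin m, ∑ p : Fin n, ∑ q : Fin n, D p q h * y p q h) :=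
  gap_lp_relaxation_integral_optimum_general hm D Feas hFeas
end

section
/- A feasible GAP instance has an optimal solution of objective value k* if and only if there exists a minimum-cost maximum flow F* over the corresponding graph G* with cost(F*) = k*; moreover the optimal GAP solution is recovered as x_{pqh} = F*(n_{ph}, n_{qh}). -/
section

variable (P Q H : Type*) [Fintype P] [Fintype Q] [Fintype H]

/-- An integral valid flow over the GAP graph `G*`, given by its values on the
five layers of unit-capacity edges, satisfying capacity and conservation
constraints at every internal node. -/
structure GapFlow where
  a : P → ℕ
  b : P → H → ℕ
  mid : P → Q → H → ℕ
  c : Q → H → ℕ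
  d : Q → ℕ
  cap_a : ∀ p, a p ≤ 1
  cap_b : ∀ p h, b p h ≤ 1
  cap_mid : ∀ p q h, mid p q h ≤ 1
  cap_c : ∀ q h, c q h ≤ 1
  cap_d : ∀ q, d q ≤ 1
  cons_p : ∀ p, a p = ∑ h : H, b p h
  cons_ph : ∀ p h, b p h = ∑ q : Q, mid p q h
  cons_qh : ∀ q h, c q h = ∑ p : P, mid p q h
  cons_q : ∀ q, d q = ∑ h : H, c q h

variable {P Q H}

/-- The value of a flow: total flow out of the source `s`. -/
def GapFlow.value (F : GapFlow P Q H) : ℕ := ∑ p : P, F.a p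

/-- The cost of a flow: edge costs are `D_{pq}(θ_h)` on middle edges, `0`
elsewhere. -/
def GapFlow.cost (D : P → Q → H → ℝ) (F : GapFlow P Q H) : ℝ :=
  ∑ p : P, ∑ q : Q, ∑ h : H, D p q h * (F.mid p q h : ℝ)

/-- A maximum flow. -/
def GapFlow.IsMaxFlow (F : GapFlow P Q H) : Prop :=
  ∀ F' : GapFlow P Q H, F'.value ≤ F.value

/-- A minimum-cost maximum flow. -/
def GapFlow.IsMinCostMaxFlow (D : P → Q → H → ℝ) (F : GapFlow P Q H) : Prop :=
  F.IsMaxFlow ∧ ∀ F' : GapFlow P Q H, F'.IsMaxFlow → F.cost D ≤ F'.cost D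

/-- Feasibility for GAP: a binary assignment matching each left feature to
exactly one right feature under exactly one model, and vice versa. -/
def GapFeasible (x : P → Q → H → ℕ) : Prop :=
  (∀ p q h, x p q h ≤ 1) ∧
  (∀ p : P, ∑ h : H, ∑ q : Q, x p q h = 1) ∧
  (∀ q : Q, ∑ h : H, ∑ p : P, x p q h = 1)

/-- The GAP objective. -/
def gapObj (D : P → Q → H → ℝ) (x : P → Q → H → ℕ) : ℝ :=
  ∑ p : P, ∑ q : Q, ∑ h : H, D p q h * (x p q h : ℝ)

/-- An optimal GAP solution. -/
def GapOptimal (D : P → Q → H → ℝ) (x : P → Q → H → ℕ) : Prop :=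
  GapFeasible x ∧ ∀ y, GapFeasible y → gapObj D x ≤ gapObj D y

/-! A flow has value at most `|P|`, and by conservation it is determined by its middle layer
`F.mid`. The value is `|P|` exactly when every source and sink edge is saturated, i.e. when
`F.mid` is a GAP assignment; conversely every assignment is the middle layer of such a flow.
Since the cost of a flow is the GAP objective of its middle layer, minimum-cost maximum flows
and optimal assignments correspond. -/

lemma Fintype.eq_one_of_sum_eq_card {ι : Type*} [Fintype ι] {f : ι → ℕ}
    (hf : ∀ i, f i ≤ 1) (hsum : ∑ i, f i = Fintype.card ι) (i : ι) : f i = 1 := by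
  have hsum' : ∑ i, f i = ∑ _i : ι, 1 := by simpa using hsum
  exact (Finset.sum_eq_sum_iff_of_le fun i _ => hf i).mp hsum' i (Finset.mem_univ i)

namespace GapFlow

lemma a_eq_sum_mid (F : GapFlow P Q H) (p : P) : F.a p = ∑ h, ∑ q, F.mid p q h := by
  simp only [F.cons_p, F.cons_ph]

lemma d_eq_sum_mid (F : GapFlow P Q H) (q : Q) : F.d q = ∑ h, ∑ p, F.mid p q h := by
  simp only [F.cons_q, F.cons_qh]

lemma value_eq_sum_d (F : GapFlow P Q H) : F.value = ∑ q, F.d q := by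
  simp only [value, a_eq_sum_mid, d_eq_sum_mid]
  rw [Finset.sum_comm, Finset.sum_comm (s := Finset.univ (α := Q))]
  exact Finset.sum_congr rfl fun _ _ => Finset.sum_comm

lemma cost_eq_gapObj_mid (D : P → Q → H → ℝ) (F : GapFlow P Q H) :
    F.cost D = gapObj D F.mid := rfl

lemma value_le_card (F : GapFlow P Q H) : F.value ≤ Fintype.card P :=
  calc F.value ≤ ∑ _p : P, 1 := Finset.sum_le_sum fun p _ => F.cap_a p
    _ = Fintype.card P := by simp

/-- The flow sending one unit along `s → n_p → n_{ph} → n_{qh} → n_q → t` for every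
`x p q h = 1`. -/
def ofGapFeasible (x : P → Q → H → ℕ) (hx : GapFeasible x) : GapFlow P Q H where
  a _ := 1
  b p h := ∑ q, x p q h
  mid := x
  c q h := ∑ p, x p q h
  d _ := 1
  cap_a _ := le_rfl
  cap_b p h := (Finset.single_le_sum (f := fun h => ∑ q, x p q h)
    (fun _ _ => Nat.zero_le _) (Finset.mem_univ h)).trans_eq (hx.2.1 p)
  cap_mid := hx.1
  cap_c q h := (Finset.single_le_sum (f := fun h => ∑ p, x p q h)
    (fun _ _ => Nat.zero_le _) (Finset.mem_univ h)).trans_eq (hx.2.2 q)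
  cap_d _ := le_rfl
  cons_p p := (hx.2.1 p).symm
  cons_ph _ _ := rfl
  cons_qh _ _ := rfl
  cons_q q := (hx.2.2 q).symm

@[simp]
lemma ofGapFeasible_mid (x : P → Q → H → ℕ) (hx : GapFeasible x) :
    (ofGapFeasible x hx).mid = x := rfl

lemma value_ofGapFeasible (x : P → Q → H → ℕ) (hx : GapFeasible x) :
    (ofGapFeasible x hx).value = Fintype.card P := by
  simp [ofGapFeasible, value]

end GapFlow

lemma GapFeasible.card_eq {x : P → Q → H → ℕ} (hx : GapFeasible x) :
    Fintype.card P = Fintype.card Q := by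
  rw [← GapFlow.value_ofGapFeasible x hx, GapFlow.value_eq_sum_d]
  simp [GapFlow.ofGapFeasible]

namespace GapFlow

lemma isMaxFlow_iff_value_eq_card {x : P → Q → H → ℕ} (hx : GapFeasible x)
    (F : GapFlow P Q H) : F.IsMaxFlow ↔ F.value = Fintype.card P := by
  refine ⟨fun hF => (value_le_card F).antisymm ?_, fun hF F' => hF ▸ value_le_card F'⟩
  exact (value_ofGapFeasible x hx).ge.trans (hF _)

lemma gapFeasible_mid_iff_value_eq_card (hcard : Fintype.card P = Fintype.card Q)
    (F : GapFlow P Q H) : GapFeasible F.mid ↔ F.value = Fintype.card P := by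
  constructor
  · intro hmid
    simp [value, a_eq_sum_mid, hmid.2.1]
  · intro hv
    refine ⟨F.cap_mid, fun p => ?_, fun q => ?_⟩
    · rw [← a_eq_sum_mid]
      exact Fintype.eq_one_of_sum_eq_card F.cap_a hv p
    · rw [← d_eq_sum_mid]
      exact Fintype.eq_one_of_sum_eq_card F.cap_d (by rw [← value_eq_sum_d, hv, hcard]) q

lemma isMaxFlow_iff_gapFeasible_mid {x : P → Q → H → ℕ} (hx : GapFeasible x)
    (F : GapFlow P Q H) : F.IsMaxFlow ↔ GapFeasible F.mid := by
  rw [isMaxFlow_iff_value_eq_card hx, gapFeasible_mid_iff_value_eq_card hx.card_eq]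

lemma isMinCostMaxFlow_iff_gapOptimal_mid {x : P → Q → H → ℕ} (hx : GapFeasible x)
    (D : P → Q → H → ℝ) (F : GapFlow P Q H) :
    F.IsMinCostMaxFlow D ↔ GapOptimal D F.mid := by
  simp only [IsMinCostMaxFlow, GapOptimal, isMaxFlow_iff_gapFeasible_mid hx, cost_eq_gapObj_mid]
  exact and_congr_right fun _ =>
    ⟨fun hmin y hy => hmin (ofGapFeasible y hy) hy, fun hopt F' hF' => hopt _ hF'⟩

end GapFlow

theorem gap_optimum_iff_minCostMaxFlow_general
    (D : P → Q → H → ℝ)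
    (hfeasible : ∃ x : P → Q → H → ℕ, GapFeasible x) :
    (∀ k : ℝ,
      ((∃ x, GapOptimal D x ∧ gapObj D x = k) ↔
        (∃ F : GapFlow P Q H, F.IsMinCostMaxFlow D ∧ F.cost D = k))) ∧
    (∀ F : GapFlow P Q H, F.IsMinCostMaxFlow D → GapOptimal D F.mid) := by
  obtain ⟨x₀, hx₀⟩ := hfeasible
  have hiff := GapFlow.isMinCostMaxFlow_iff_gapOptimal_mid hx₀ D
  refine ⟨fun k => ⟨?_, ?_⟩, fun F => (hiff F).mp⟩
  · rintro ⟨x, hx, rfl⟩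
    exact ⟨GapFlow.ofGapFeasible x hx.1, (hiff _).mpr hx, rfl⟩
  · rintro ⟨F, hF, rfl⟩
    exact ⟨F.mid, (hiff F).mp hF, rfl⟩

/-- A feasible GAP instance has an optimal solution of objective value `k*` iff
there is a minimum-cost maximum flow `F*` over `G*` with `cost(F*) = k*`;
moreover the optimal GAP solution is recovered as `x_{pqh} = F*(n_{ph},n_{qh})`. -/
theorem gap_optimum_iff_minCostMaxFlow
    (hcard : Fintype.card P = Fintype.card Q)
    (D : P → Q → H → ℝ)
    (hfeasible : ∃ x : P → Q → H → ℕ, GapFeasible x) :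
    (∀ k : ℝ,
      ((∃ x, GapOptimal D x ∧ gapObj D x = k) ↔
        (∃ F : GapFlow P Q H, F.IsMinCostMaxFlow D ∧ F.cost D = k))) ∧
    (∀ F : GapFlow P Q H, F.IsMinCostMaxFlow D → GapOptimal D F.mid) :=
  gap_optimum_iff_minCostMaxFlow_general D hfeasible

end
end
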